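/- arXiv:1211.6223 — 2 statements merged into one kernel-verified Lean document; each statement's English description precedes it below -/
import Mathlib

section
/- The improper integral over the real line of the complex rational function x ↦ (2i − 6x)/((x−i)³(x+i)³) equals (3/4)πi. -/
/-!
For real `x`, `(x - i)(x + i) = 1 + x²`, so the integrand is `(2i - 6x) / (1 + x²)³`. Its odd
part `-6x / (1 + x²)³` integrates to zero. Integrating the derivative of `x / (1 + x²)ⁿ⁺¹` over
`ℝ` gives the reduction formula `(2n + 2) Iₙ₊₂ = (2n + 1) Iₙ₊₁` for `Iₙ = ∫ (1 + x²)⁻ⁿ`; starting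
from `I₁ = π` this yields `Iₙ₊₁ = π binom(2n, n) / 4ⁿ`, in particular `I₃ = 3π/8`.
-/

open Complex MeasureTheory Filter Topology Real

theorem Function.Odd.integral_eq_zero {G E : Type*} [MeasurableSpace G] [AddGroup G]
    [MeasurableNeg G] {μ : Measure G} [μ.IsNegInvariant] [NormedAddCommGroup E]
    [NormedSpace ℝ E] {f : G → E} (hf : f.Odd) : ∫ x, f x ∂μ = 0 := by
  have h : ∫ x, f x ∂μ = -∫ x, f x ∂μ := by
    rw [← integral_neg, ← integral_neg_eq_self f μ]
    exact integral_congr_ae (ae_of_all _ hf)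
  rw [← sub_eq_zero, sub_neg_eq_add, ← two_smul ℝ, smul_eq_zero] at h
  exact h.resolve_left two_ne_zero

theorem integrable_inv_one_add_sq_pow {n : ℕ} (hn : n ≠ 0) :
    Integrable fun x : ℝ ↦ ((1 + x ^ 2) ^ n)⁻¹ := by
  refine integrable_inv_one_add_sq.mono (by fun_prop) (ae_of_all _ fun x ↦ ?_)
  have h0 : 0 < 1 + x ^ 2 := by positivity
  simp only [norm_inv, norm_pow, Real.norm_eq_abs, abs_of_pos h0]
  exact inv_anti₀ h0 (le_self_pow₀ (le_add_of_nonneg_right (sq_nonneg x)) hn)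

theorem integrable_mul_inv_one_add_sq_pow {n : ℕ} (hn : 2 ≤ n) :
    Integrable fun x : ℝ ↦ x * ((1 + x ^ 2) ^ n)⁻¹ := by
  obtain ⟨k, rfl⟩ := Nat.exists_eq_add_of_le' hn
  refine (integrable_inv_one_add_sq_pow k.succ_ne_zero).mono (by fun_prop)
    (ae_of_all _ fun x ↦ ?_)
  have h0 : 0 < 1 + x ^ 2 := by positivity
  have habs : |x| ≤ 1 + x ^ 2 := by nlinarith [sq_abs x, sq_nonneg (|x| - 1)]
  simp only [norm_mul, norm_inv, norm_pow, Real.norm_eq_abs, abs_of_pos h0]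
  calc |x| * ((1 + x ^ 2) ^ (k + 1 + 1))⁻¹
      ≤ (1 + x ^ 2) * ((1 + x ^ 2) ^ (k + 1 + 1))⁻¹ := by gcongr
    _ = ((1 + x ^ 2) ^ (k + 1))⁻¹ := by field_simp; ring

theorem tendsto_mul_inv_one_add_sq_pow_cocompact {n : ℕ} (hn : n ≠ 0) :
    Tendsto (fun x : ℝ ↦ x * ((1 + x ^ 2) ^ n)⁻¹) (cocompact ℝ) (𝓝 0) := by
  refine squeeze_zero_norm' ?_ (tendsto_inv_atTop_zero.comp tendsto_norm_cocompact_atTop)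
  filter_upwards [tendsto_norm_cocompact_atTop.eventually_gt_atTop 0] with x hx
  have h0 : 0 < 1 + x ^ 2 := by positivity
  simp only [Function.comp_apply, norm_mul, norm_inv, norm_pow, Real.norm_eq_abs,
    abs_of_pos h0] at hx ⊢
  calc |x| * ((1 + x ^ 2) ^ n)⁻¹ ≤ |x| * (1 + x ^ 2)⁻¹ := by
        gcongr; exact le_self_pow₀ (le_add_of_nonneg_right (sq_nonneg x)) hn
    _ ≤ |x| * (|x| ^ 2)⁻¹ := by gcongr; simp [sq_abs]
    _ = |x|⁻¹ := by field_simp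

theorem hasDerivAt_mul_inv_one_add_sq_pow (k : ℕ) (x : ℝ) :
    HasDerivAt (fun x : ℝ ↦ x * ((1 + x ^ 2) ^ (k + 1))⁻¹)
      ((2 * k + 2 : ℝ) * ((1 + x ^ 2) ^ (k + 2))⁻¹ - (2 * k + 1 : ℝ) * ((1 + x ^ 2) ^ (k + 1))⁻¹)
      x := by
  have h0 : 1 + x ^ 2 ≠ 0 := by positivity
  have hpow := (((hasDerivAt_pow 2 x).const_add 1).fun_pow (k + 1)).fun_inv (pow_ne_zero _ h0)
  refine ((hasDerivAt_id' x).fun_mul hpow).congr_deriv ?_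
  simp only [Nat.add_sub_cancel, Nat.cast_add, Nat.cast_one, Nat.cast_ofNat]
  field_simp
  ring

theorem integral_inv_one_add_sq_pow_add_two (k : ℕ) :
    ∫ x : ℝ, ((1 + x ^ 2) ^ (k + 2))⁻¹
      = (2 * k + 1 : ℝ) / (2 * k + 2) * ∫ x : ℝ, ((1 + x ^ 2) ^ (k + 1))⁻¹ := by
  have hk₂ := (integrable_inv_one_add_sq_pow (n := k + 2) (by omega)).const_mul (2 * k + 2 : ℝ)
  have hk₁ := (integrable_inv_one_add_sq_pow (n := k + 1) (by omega)).const_mul (2 * k + 1 : ℝ)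
  have hlim := tendsto_mul_inv_one_add_sq_pow_cocompact (n := k + 1) (by omega)
  have hF := integral_of_hasDerivAt_of_tendsto (hasDerivAt_mul_inv_one_add_sq_pow k)
    (hk₂.sub hk₁) (hlim.mono_left atBot_le_cocompact) (hlim.mono_left atTop_le_cocompact)
  rw [integral_sub hk₂ hk₁, integral_const_mul, integral_const_mul, sub_self, sub_eq_zero] at hF
  rw [div_mul_eq_mul_div, eq_div_iff (by positivity)]
  linarith

theorem integral_inv_one_add_sq_pow_succ (n : ℕ) :
    ∫ x : ℝ, ((1 + x ^ 2) ^ (n + 1))⁻¹ = π * n.centralBinom / 4 ^ n := by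
  induction n with
  | zero => simp [integral_univ_inv_one_add_sq]
  | succ k ih =>
    have hc : ((k + 1) * (k + 1).centralBinom : ℝ) = 2 * (2 * k + 1) * k.centralBinom := by
      exact_mod_cast Nat.succ_mul_centralBinom_succ k
    rw [integral_inv_one_add_sq_pow_add_two, ih]
    field_simp
    linear_combination (-(2 * 4 ^ k : ℝ)) * hc

theorem Complex.ofReal_sub_I_mul_ofReal_add_I (x : ℝ) :
    ((x : ℂ) - I) * (x + I) = ((1 + x ^ 2 : ℝ) : ℂ) := by
  push_cast
  linear_combination (-1 : ℂ) * I_sq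

theorem integral_dim5 :
    ∫ x : ℝ, ((2 * I - 6 * x) / ((x - I) ^ 3 * (x + I) ^ 3) : ℂ)
      = ((3 : ℂ) / 4) * (Real.pi : ℂ) * I := by
  have hsplit : ∀ x : ℝ, ((2 * I - 6 * x) / ((x - I) ^ 3 * (x + I) ^ 3) : ℂ)
      = 2 * I * ((((1 + x ^ 2) ^ 3)⁻¹ : ℝ) : ℂ) - 6 * ((x * ((1 + x ^ 2) ^ 3)⁻¹ : ℝ) : ℂ) := by
    intro x
    rw [← mul_pow, ofReal_sub_I_mul_ofReal_add_I]
    push_cast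
    ring
  have hodd : (fun x : ℝ ↦ x * ((1 + x ^ 2) ^ 3)⁻¹).Odd := fun x ↦ by simp
  simp_rw [hsplit]
  rw [integral_sub ((integrable_inv_one_add_sq_pow three_ne_zero).ofReal.const_mul _)
      ((integrable_mul_inv_one_add_sq_pow (by norm_num)).ofReal.const_mul _),
    integral_const_mul, integral_const_mul, integral_complex_ofReal, integral_complex_ofReal,
    integral_inv_one_add_sq_pow_succ 2, hodd.integral_eq_zero]
  norm_num [Nat.centralBinom, Nat.choose]
  ring
end

section
/- Let V be an 8-dimensional complex vector space, let a, b, p be linear endomorphisms of V, let h be a real number, and assume a∘a = −id, b∘b = −id, a∘b = −b∘a, tr(a∘p) = −4h, and tr(b∘p) = 0. Then for every real number ξ, the trace of the composition (1/(4(ξ−i)²))·[ (5h/2)·b − (5ih/2)·a − (2+iξ)·(a∘b∘p) + i·p ] ∘ [ (1/(1+ξ²)³)·( −4iξ·a + (i − 3iξ²)·b ) ] equals h·(3 + 12iξ + 3ξ²)/((ξ−i)⁴(ξ+i)³). -/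
open Complex

/-! Expanding the composition bilinearly, the trace is a combination of the eight traces
`tr (x ∘ y)` with `x ∈ {b, a, a ∘ b ∘ p, p}` and `y ∈ {a, b}`. The Clifford relations reduce each
to `tr id = 8`, `tr (a ∘ p) = -4h` or `tr (b ∘ p) = 0`: anticommuting maps have traceless
product, and cyclicity moves the outer factor of `a ∘ b ∘ p ∘ y` next to `a` or `b`, where it
squares to `-id`. What remains is an identity of rational functions in `ξ`. -/

namespace LinearMap

variable {K V : Type*} [Field K] [AddCommGroup V] [Module K V] [FiniteDimensional K V]

theorem trace_comp_eq_zero_of_comp_eq_neg [CharZero K] {a b : V →ₗ[K] V}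
    (hab : a ∘ₗ b = -(b ∘ₗ a)) : trace K V (a ∘ₗ b) = 0 := by
  have h : trace K V (a ∘ₗ b) = -trace K V (a ∘ₗ b) := by
    conv_lhs => rw [hab, map_neg, trace_comp_comm']
  exact CharZero.eq_neg_self_iff.mp h

theorem trace_comp_self_of_comp_self_eq_neg_id {a : V →ₗ[K] V} (haa : a ∘ₗ a = -id) :
    trace K V (a ∘ₗ a) = -Module.finrank K V := by
  rw [haa, map_neg, trace_id]

theorem trace_comp_comp_self_of_comp_self_eq_neg_id {a : V →ₗ[K] V} (haa : a ∘ₗ a = -id)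
    (q : V →ₗ[K] V) : trace K V ((a ∘ₗ q) ∘ₗ a) = -trace K V q := by
  rw [trace_comp_comm', ← comp_assoc, haa, neg_comp, id_comp, map_neg]

theorem trace_comp_comp_comp_of_anticomm {a b : V →ₗ[K] V} (hbb : b ∘ₗ b = -id)
    (hab : a ∘ₗ b = -(b ∘ₗ a)) (p : V →ₗ[K] V) :
    trace K V ((a ∘ₗ b ∘ₗ p) ∘ₗ b) = trace K V (a ∘ₗ p) := by
  have hba : b ∘ₗ a = -(a ∘ₗ b) := by rw [hab, neg_neg]
  rw [trace_comp_comm', ← comp_assoc, ← comp_assoc, hba, neg_comp, comp_assoc, hbb]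
  simp only [comp_neg, comp_id, neg_neg]

end LinearMap

theorem trace_case_c_B1 (V : Type*) [AddCommGroup V] [Module ℂ V] [FiniteDimensional ℂ V]
    (hdim : Module.finrank ℂ V = 8)
    (a b p : V →ₗ[ℂ] V) (h : ℝ)
    (haa : a ∘ₗ a = -LinearMap.id)
    (hbb : b ∘ₗ b = -LinearMap.id)
    (hab : a ∘ₗ b = -(b ∘ₗ a))
    (hap : LinearMap.trace ℂ V (a ∘ₗ p) = -4 * (h : ℂ))
    (hbp : LinearMap.trace ℂ V (b ∘ₗ p) = 0) :
    ∀ ξ : ℝ, LinearMap.trace ℂ V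
      (((1 / (4 * ((ξ : ℂ) - I) ^ 2)) •
          ((5 * (h : ℂ) / 2) • b - (5 * I * (h : ℂ) / 2) • a
            - (2 + I * (ξ : ℂ)) • (a ∘ₗ b ∘ₗ p) + I • p))
        ∘ₗ ((1 / (1 + (ξ : ℂ) ^ 2) ^ 3) •
            ((-4 * I * (ξ : ℂ)) • a + (I - 3 * I * (ξ : ℂ) ^ 2) • b)))
      = (h : ℂ) * (3 + 12 * I * (ξ : ℂ) + 3 * (ξ : ℂ) ^ 2) /
          (((ξ : ℂ) - I) ^ 4 * ((ξ : ℂ) + I) ^ 3) := by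
  intro ξ
  have hsub : (ξ : ℂ) - I ≠ 0 := fun hc => by simpa using congrArg im hc
  have hadd : (ξ : ℂ) + I ≠ 0 := fun hc => by simpa using congrArg im hc
  have hsq : 1 + (ξ : ℂ) ^ 2 = ((ξ : ℂ) - I) * ((ξ : ℂ) + I) := by
    linear_combination I_sq
  open LinearMap in
  simp only [comp_smul, smul_comp, add_comp, comp_add, sub_comp, map_add, map_sub, map_smul,
    smul_eq_mul]
  open LinearMap in
  rw [trace_comp_comm' a b, trace_comp_comm' a p, trace_comp_comm' b p,
    trace_comp_eq_zero_of_comp_eq_neg hab, trace_comp_self_of_comp_self_eq_neg_id haa,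
    trace_comp_self_of_comp_self_eq_neg_id hbb, trace_comp_comp_self_of_comp_self_eq_neg_id haa,
    trace_comp_comp_comp_of_anticomm hbb hab, hap, hbp, hdim, hsq]
  field_simp
  linear_combination (-24 * (h : ℂ) * ξ * (1 + (ξ : ℂ) ^ 2)) * I_sq
end
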